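/- Fix an integer k ≥ 2, let f_ℓ(n) be the number of row-convex k-omino towers of n blocks over a platform of width ℓk, and let F_ℓ = Σ_{n=0}^∞ f_ℓ(n) z^n ∈ ℚ[[z]]. With A_ℓ, B_ℓ ∈ ℚ[[z]] as defined below and T_{s,t} = A_s B_t − A_t B_s, for every ℓ ≥ 1 the following identity holds in ℚ[[z]]: F_ℓ · [(1 − (2k−1)(1+z)z + k² z³) T_{1,2} + (k−1)((2k−1)z − 1) z³ T_{1,3} + (k−1)² z⁵ T_{2,3}] = (1 + kz) T_{1,ℓ} + (kz² − 1) T_{2,ℓ} + (k−1) z³ T_{3,ℓ}. -/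

import Mathlib

/-- A block: a rectangle of width `width` and height 1, whose leftmost cell is in
column `left` and whose row is `height`. -/
structure Blk where
  left : ℤ
  height : ℕ
  width : ℕ
deriving DecidableEq

/-- The set of columns occupied by a block. -/
def Blk.colsSet (b : Blk) : Set ℤ := Set.Ico b.left (b.left + b.width)

/-- The set of cells occupied by a block. -/
def Blk.cells (b : Blk) : Set (ℤ × ℕ) := b.colsSet ×ˢ ({b.height} : Set ℕ)

/-- The blocks of a configuration occupy pairwise disjoint cells. -/
def disjointCells (T : Finset Blk) : Prop :=
  (T : Set Blk).Pairwise fun a b => Disjoint a.cells b.cells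

/-- Every block at height `h + 1` shares a column with some block at height `h`. -/
def supported (T : Finset Blk) : Prop :=
  ∀ b ∈ T, ∀ h : ℕ, b.height = h + 1 →
    ∃ b' ∈ T, b'.height = h ∧ ∃ x : ℤ, x ∈ b.colsSet ∧ x ∈ b'.colsSet

/-- The set of columns occupied by the blocks of `T` at height `h`. -/
def colsAt (T : Finset Blk) (h : ℕ) : Set ℤ :=
  {x | ∃ b ∈ T, b.height = h ∧ x ∈ b.colsSet}

/-- Every row is convex: at each height, the set of occupied columns is an interval. -/
def rowConvex (T : Finset Blk) : Prop :=
  ∀ h : ℕ, ∀ x y z : ℤ, x ∈ colsAt T h → z ∈ colsAt T h → x ≤ y → y ≤ z →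
    y ∈ colsAt T h

/-- A row-convex `k`-omino tower over a platform of width `ℓk`: a finite, possibly
empty, collection of pairwise disjoint blocks of width `k`, every row convex, every
block at height `h ≥ 1` sharing a column with some block at height `h − 1`, and every
block at height `0` sharing a column with the platform `{0, 1, …, ℓk − 1}`.
Configurations are not identified up to translation. -/
def IsPlatformRC (k ℓ : ℕ) (T : Finset Blk) : Prop :=
  (∀ b ∈ T, b.width = k) ∧ disjointCells T ∧ supported T ∧ rowConvex T ∧
    ∀ b ∈ T, b.height = 0 → ∃ x : ℤ, x ∈ b.colsSet ∧ 0 ≤ x ∧ x < (ℓ * k : ℤ)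

/-- `f_ℓ(n)`: the number of row-convex `k`-omino towers of `n` blocks over a platform
of width `ℓk`. -/
noncomputable def fPlatform (k ℓ n : ℕ) : ℕ :=
  Nat.card {T : Finset Blk // IsPlatformRC k ℓ T ∧ T.card = n}

/-- The `q`-Pochhammer symbol `(z;z)_j = ∏_{i=1}^{j} (1 − zⁱ)` in `ℚ[[z]]`. -/
noncomputable def qPoch (j : ℕ) : PowerSeries ℚ :=
  ∏ i ∈ Finset.Icc 1 j, (1 - (PowerSeries.X : PowerSeries ℚ) ^ i)

/-- `h_j = z^{j(j+1)} · ((1−k)z; z)_j = z^{j(j+1)} · ∏_{i=1}^{j} (1 + (k−1) zⁱ)`. -/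
noncomputable def hSer (k j : ℕ) : PowerSeries ℚ :=
  (PowerSeries.X : PowerSeries ℚ) ^ (j * (j + 1)) *
    ∏ i ∈ Finset.Icc 1 j, (1 + PowerSeries.C ((k : ℚ) - 1) * PowerSeries.X ^ i)

/-- The `j`-th summand `z^{ℓj} h_j (z;z)_j^{−2}` of `A_ℓ`. -/
noncomputable def Aterm (k ℓ j : ℕ) : PowerSeries ℚ :=
  (PowerSeries.X : PowerSeries ℚ) ^ (ℓ * j) * hSer k j * ((qPoch j)⁻¹) ^ 2

/-- `A_ℓ = Σ_{j=0}^∞ z^{ℓj} h_j (z;z)_j^{−2}`.  The series converges in the `z`-adic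
topology since `h_j` is divisible by `z^{j(j+1)}`; the coefficient of `zⁿ` only receives
contributions from the finitely many `j ≤ n`, so the sum may be truncated there. -/
noncomputable def Aser (k ℓ : ℕ) : PowerSeries ℚ :=
  PowerSeries.mk fun n =>
    ∑ j ∈ Finset.range (n + 1), PowerSeries.coeff n (Aterm k ℓ j)

/-- The factor `ℓ + Σ_{m=1}^{j} (1 + 2(1 − z^m)^{−1} − (1 + (k−1) z^m)^{−1})`. -/
noncomputable def Bfactor (k ℓ j : ℕ) : PowerSeries ℚ :=
  (ℓ : PowerSeries ℚ) +
    ∑ m ∈ Finset.Icc 1 j,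
      (1 + 2 * ((1 - (PowerSeries.X : PowerSeries ℚ) ^ m)⁻¹) -
        ((1 + PowerSeries.C ((k : ℚ) - 1) * PowerSeries.X ^ m)⁻¹))

/-- The `j`-th summand of `B_ℓ`. -/
noncomputable def Bterm (k ℓ j : ℕ) : PowerSeries ℚ :=
  Aterm k ℓ j * Bfactor k ℓ j

/-- `B_ℓ = Σ_{j=0}^∞ z^{ℓj} h_j (z;z)_j^{−2} ·
(ℓ + Σ_{m=1}^{j} (1 + 2(1 − z^m)^{−1} − (1 + (k−1) z^m)^{−1}))`, the series converging
`z`-adically since `h_j` is divisible by `z^{j(j+1)}`. -/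
noncomputable def Bser (k ℓ : ℕ) : PowerSeries ℚ :=
  PowerSeries.mk fun n =>
    ∑ j ∈ Finset.range (n + 1), PowerSeries.coeff n (Bterm k ℓ j)

/-- `F_ℓ = Σ_{n≥0} f_ℓ(n) zⁿ ∈ ℚ[[z]]`, where `f_ℓ(n)` is the number of row-convex
`k`-omino towers of `n` blocks over a platform of width `ℓk`. -/
noncomputable def Fser (k ℓ : ℕ) : PowerSeries ℚ :=
  PowerSeries.mk fun n => (fPlatform k ℓ n : ℚ)

/-- `T_{s,t} = A_s B_t − A_t B_s`. -/
noncomputable def Tst (k s t : ℕ) : PowerSeries ℚ :=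
  Aser k s * Bser k t - Aser k t * Bser k s


/-!
Removing the bottom row of a tower leaves a tower over that row. The bottom row is a run of
`i ≤ j + 1` adjacent blocks meeting the platform of width `jk`, which can be placed in
`k (j + 2 - i) - 1` ways, so `F_j = 1 + ∑_{i=1}^{j+1} (k (j + 2 - i) - 1) zⁱ F_i` for `j ≥ 1`.

The second difference in `j` of the defect `x_j - ∑_{i=1}^{j+1} (k (j + 2 - i) - 1) zⁱ x_i` of a
sequence is `x_j - 2 x_{j+1} + (1 - z^{j+2}) x_{j+2} - (k - 1) z^{j+3} x_{j+3}`. Both `A` and `B`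
satisfy this recurrence, because their summands telescope in the summation index. So their defects
are affine in `j`, and a combination `W = δ A - β B` has constant defect `Δ`. The system
`x_j = Δ + ∑_{i=1}^{j+1} (k (j + 2 - i) - 1) zⁱ x_i` (`j ≥ 1`) is contracting in the `z`-adic
topology, so `F_ℓ Δ = W_ℓ`. Writing `Δ` and `W_ℓ` in terms of `A_1, A_2, A_3, B_1, B_2, B_3` gives
the identity.
-/

open PowerSeries Finset

noncomputable section

namespace PowerSeries

variable {R : Type*} [CommRing R]

theorem eq_of_forall_X_pow_dvd_sub {f g : R⟦X⟧} (h : ∀ n, X ^ n ∣ f - g) : f = g := by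
  ext n
  simpa [sub_eq_zero] using X_pow_dvd_iff.1 (h (n + 1)) n n.lt_succ_self

/-- The `X`-adic sum `∑ tᵢ`, meaningful when `Xⁱ ∣ tᵢ`. -/
def xadicSum (t : ℕ → R⟦X⟧) : R⟦X⟧ :=
  mk fun n => ∑ i ∈ range (n + 1), coeff n (t i)

variable {t : ℕ → R⟦X⟧}

theorem X_pow_dvd_xadicSum_sub (ht : ∀ i, X ^ i ∣ t i) (n : ℕ) :
    X ^ n ∣ xadicSum t - ∑ i ∈ range n, t i := by
  refine X_pow_dvd_iff.2 fun m hm => ?_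
  rw [map_sub, xadicSum, coeff_mk, map_sum, sub_eq_zero]
  refine sum_subset (range_subset_range.2 hm) fun i _ hi => ?_
  exact X_pow_dvd_iff.1 (ht i) m (by simpa using hi)

theorem mul_xadicSum (ht : ∀ i, X ^ i ∣ t i) (p : R⟦X⟧) :
    p * xadicSum t = xadicSum fun i => p * t i := by
  refine eq_of_forall_X_pow_dvd_sub fun n => ?_
  have hpt : ∀ i, X ^ i ∣ p * t i := fun i => dvd_mul_of_dvd_right (ht i) p
  have := dvd_sub (dvd_mul_of_dvd_right (X_pow_dvd_xadicSum_sub ht n) p)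
    (X_pow_dvd_xadicSum_sub hpt n)
  rwa [mul_sub, mul_sum, sub_sub_sub_cancel_right] at this

theorem xadicSum_add (s t : ℕ → R⟦X⟧) :
    xadicSum (fun i => s i + t i) = xadicSum s + xadicSum t := by
  ext n; simp [xadicSum, sum_add_distrib]

theorem xadicSum_sub (s t : ℕ → R⟦X⟧) :
    xadicSum (fun i => s i - t i) = xadicSum s - xadicSum t := by
  ext n; simp [xadicSum, sum_sub_distrib]

theorem xadicSum_telescope {G : ℕ → R⟦X⟧} (hG : ∀ i, X ^ i ∣ G i) :
    xadicSum (fun i => G i - G (i + 1)) = G 0 := by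
  have ht : ∀ i, X ^ i ∣ G i - G (i + 1) := fun i =>
    dvd_sub (hG i) ((pow_dvd_pow X i.le_succ).trans (hG (i + 1)))
  refine eq_of_forall_X_pow_dvd_sub fun n => ?_
  have := dvd_sub (X_pow_dvd_xadicSum_sub ht n) (hG n)
  rwa [sum_range_sub', sub_sub, sub_add_cancel] at this

theorem one_sub_X_pow_mul_inv {K : Type*} [Field K] {m : ℕ} (hm : 1 ≤ m) :
    (1 - X ^ m : K⟦X⟧) * (1 - X ^ m)⁻¹ = 1 :=
  PowerSeries.mul_inv_cancel _ (by simp [zero_pow (by omega : m ≠ 0)])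

end PowerSeries

namespace RowConvex

section Recurrence

variable {R : Type*} [CommRing R] (κ : R)

/-- For `κ = k`, the number of positions of a run of `i ≤ j + 1` adjacent blocks of width `k`
meeting a platform of width `jk`. -/
def weight (j i : ℕ) : R := κ * (j + 2 - i) - 1

def defect (x : ℕ → R⟦X⟧) (j : ℕ) : R⟦X⟧ :=
  x j - ∑ i ∈ Icc 1 (j + 1), C (weight κ j i) * X ^ i * x i

def recurrenceExpr (x : ℕ → R⟦X⟧) (j : ℕ) : R⟦X⟧ :=
  x j - 2 * x (j + 1) + (1 - X ^ (j + 2)) * x (j + 2) - C (κ - 1) * X ^ (j + 3) * x (j + 3)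

variable {κ}

theorem defect_sub_two_mul_add (x : ℕ → R⟦X⟧) (j : ℕ) :
    defect κ x j - 2 * defect κ x (j + 1) + defect κ x (j + 2) = recurrenceExpr κ x j := by
  have hw : ∀ i, C (weight κ j i) - 2 * C (weight κ (j + 1) i) + C (weight κ (j + 2) i) = 0 := by
    intro i
    simp only [weight, map_sub, map_mul, map_add, map_natCast, map_ofNat, map_one]
    push_cast
    ring
  have hsum : ∑ i ∈ Icc 1 (j + 1), C (weight κ j i) * X ^ i * x i
      - 2 * ∑ i ∈ Icc 1 (j + 1), C (weight κ (j + 1) i) * X ^ i * x i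
      + ∑ i ∈ Icc 1 (j + 1), C (weight κ (j + 2) i) * X ^ i * x i = 0 := by
    rw [mul_sum, ← sum_sub_distrib, ← sum_add_distrib]
    exact sum_eq_zero fun i _ => by linear_combination (X ^ i * x i) * hw i
  have hw₁ : weight κ (j + 1) (j + 2) = κ - 1 := by simp only [weight]; push_cast; ring
  have hw₂ : weight κ (j + 2) (j + 2) = 2 * κ - 1 := by simp only [weight]; push_cast; ring
  have hw₃ : weight κ (j + 2) (j + 3) = κ - 1 := by simp only [weight]; push_cast; ring
  simp only [defect, recurrenceExpr, sum_Icc_succ_top (show 1 ≤ j + 2 by omega),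
    sum_Icc_succ_top (show 1 ≤ j + 3 by omega), hw₁, hw₂, hw₃, map_sub, map_mul, map_ofNat, map_one]
  linear_combination -hsum

theorem defect_succ_sub {x : ℕ → R⟦X⟧} (hx : ∀ j, recurrenceExpr κ x j = 0) (j : ℕ) :
    defect κ x (j + 1) - defect κ x j = defect κ x 2 - defect κ x 1 := by
  have hstep : ∀ j, defect κ x (j + 2) - defect κ x (j + 1) = defect κ x (j + 1) - defect κ x j :=
    fun j => by linear_combination defect_sub_two_mul_add x j + hx j
  induction j with
  | zero => exact (hstep 0).symm
  | succ j ih => rw [hstep, ih]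

theorem defect_linear (a b : R⟦X⟧) (x y : ℕ → R⟦X⟧) (j : ℕ) :
    defect κ (fun i => a * x i - b * y i) j = a * defect κ x j - b * defect κ y j := by
  have hsum : ∑ i ∈ Icc 1 (j + 1), C (weight κ j i) * X ^ i * (a * x i - b * y i) =
      a * ∑ i ∈ Icc 1 (j + 1), C (weight κ j i) * X ^ i * x i -
        b * ∑ i ∈ Icc 1 (j + 1), C (weight κ j i) * X ^ i * y i := by
    rw [mul_sum, mul_sum, ← sum_sub_distrib]
    exact sum_congr rfl fun i _ => by ring
  rw [defect, hsum, defect, defect]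
  ring

theorem defect_casoratian {x y : ℕ → R⟦X⟧} (hx : ∀ j, recurrenceExpr κ x j = 0)
    (hy : ∀ j, recurrenceExpr κ y j = 0) (j : ℕ) :
    defect κ (fun i => (defect κ y 2 - defect κ y 1) * x i - (defect κ x 2 - defect κ x 1) * y i)
        j =
      (defect κ y 2 - defect κ y 1) * defect κ x 1 -
        (defect κ x 2 - defect κ x 1) * defect κ y 1 := by
  set β := defect κ x 2 - defect κ x 1
  set δ := defect κ y 2 - defect κ y 1
  rw [defect_linear]
  have hstep : ∀ j, δ * defect κ x (j + 1) - β * defect κ y (j + 1) =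
      δ * defect κ x j - β * defect κ y j :=
    fun j => by linear_combination δ * defect_succ_sub hx j - β * defect_succ_sub hy j
  induction j with
  | zero => exact (hstep 0).symm
  | succ j ih => rw [hstep, ih]

theorem eq_zero_of_eq_sum_X_pow_mul (q : ℕ → ℕ → R⟦X⟧) {D : ℕ → R⟦X⟧}
    (hD : ∀ j, 1 ≤ j → D j = ∑ i ∈ Icc 1 (j + 1), q j i * X ^ i * D i) {j : ℕ} (hj : 1 ≤ j) :
    D j = 0 := by
  have hdvd : ∀ n j, 1 ≤ j → X ^ n ∣ D j := by
    intro n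
    induction n with
    | zero => simp
    | succ n ih =>
      intro j hj
      rw [hD j hj, pow_succ']
      refine dvd_sum fun i hi => ?_
      have hi : 1 ≤ i := (mem_Icc.1 hi).1
      rw [mul_assoc]
      exact dvd_mul_of_dvd_right (mul_dvd_mul (dvd_pow_self X (by omega)) (ih i hi)) _
  exact eq_of_forall_X_pow_dvd_sub fun n => by simpa using hdvd n j hj

theorem mul_eq_of_defect_eq {f W : ℕ → R⟦X⟧} {d : R⟦X⟧} (hf : ∀ j, 1 ≤ j → defect κ f j = 1)
    (hW : ∀ j, defect κ W j = d) {j : ℕ} (hj : 1 ≤ j) : f j * d = W j := by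
  refine sub_eq_zero.1 (eq_zero_of_eq_sum_X_pow_mul (fun j i => C (weight κ j i))
    (D := fun i => f i * d - W i) (fun j hj => ?_) hj)
  have hsum : ∑ i ∈ Icc 1 (j + 1), C (weight κ j i) * X ^ i * (f i * d - W i) =
      (∑ i ∈ Icc 1 (j + 1), C (weight κ j i) * X ^ i * f i) * d -
        ∑ i ∈ Icc 1 (j + 1), C (weight κ j i) * X ^ i * W i := by
    rw [sum_mul, ← sum_sub_distrib]
    exact sum_congr rfl fun i _ => by ring
  have h₁ := hf j hj
  have h₂ := hW j
  rw [defect] at h₁ h₂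
  rw [hsum]
  linear_combination d * h₁ - h₂

theorem recurrenceExpr_xadicSum {t : ℕ → ℕ → R⟦X⟧} (ht : ∀ ℓ i, X ^ i ∣ t ℓ i) (j : ℕ) :
    recurrenceExpr κ (fun ℓ => xadicSum (t ℓ)) j =
      xadicSum fun i => recurrenceExpr κ (fun ℓ => t ℓ i) j := by
  simp only [recurrenceExpr, mul_xadicSum (ht _), ← xadicSum_sub, ← xadicSum_add]

theorem recurrenceExpr_xadicSum_eq_zero {t : ℕ → ℕ → R⟦X⟧} (ht : ∀ ℓ i, X ^ i ∣ t ℓ i)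
    {j : ℕ} {G : ℕ → R⟦X⟧} (hG : ∀ i, X ^ i ∣ G i) (hG₀ : G 0 = 0)
    (htel : ∀ i, recurrenceExpr κ (fun ℓ => t ℓ i) j = G i - G (i + 1)) :
    recurrenceExpr κ (fun ℓ => xadicSum (t ℓ)) j = 0 := by
  rw [recurrenceExpr_xadicSum ht, funext htel, xadicSum_telescope hG, hG₀]

theorem defect_one (x : ℕ → R⟦X⟧) :
    defect κ x 1 = x 1 - (2 * C κ - 1) * X * x 1 - (C κ - 1) * X ^ 2 * x 2 := by
  rw [defect, show Icc 1 (1 + 1) = {1, 2} from rfl, sum_pair (by norm_num)]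
  simp only [weight, map_sub, map_mul, map_add, map_natCast, map_ofNat, map_one]
  push_cast
  ring

theorem defect_two (x : ℕ → R⟦X⟧) :
    defect κ x 2 = x 2 - (3 * C κ - 1) * X * x 1 - (2 * C κ - 1) * X ^ 2 * x 2
      - (C κ - 1) * X ^ 3 * x 3 := by
  rw [defect, show Icc 1 (2 + 1) = {1, 2, 3} from rfl, sum_insert (by decide),
    sum_pair (by norm_num)]
  simp only [weight, map_sub, map_mul, map_add, map_natCast, map_ofNat, map_one]
  push_cast
  ring

end Recurrence

section Series

variable (k : ℕ)

def qWeight (i : ℕ) : PowerSeries ℚ := hSer k i * (qPoch i)⁻¹ ^ 2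

theorem Aterm_eq (ℓ i : ℕ) : Aterm k ℓ i = X ^ (ℓ * i) * qWeight k i := by
  rw [Aterm, qWeight, mul_assoc]

theorem X_pow_dvd_qWeight (i : ℕ) : X ^ i ∣ qWeight k i :=
  dvd_mul_of_dvd_left (dvd_mul_of_dvd_left
    (pow_dvd_pow X (Nat.le_mul_of_pos_right i i.succ_pos)) _) _

theorem qWeight_succ (i : ℕ) :
    qWeight k (i + 1) * (1 - X ^ (i + 1)) ^ 2 =
      qWeight k i * (X ^ (i + 1)) ^ 2 * (1 + C ((k : ℚ) - 1) * X ^ (i + 1)) := by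
  have hq : qPoch (i + 1) = qPoch i * (1 - X ^ (i + 1)) := prod_Icc_succ_top (by omega) _
  have hh : hSer k (i + 1) =
      hSer k i * (X ^ (i + 1)) ^ 2 * (1 + C ((k : ℚ) - 1) * X ^ (i + 1)) := by
    rw [hSer, hSer, prod_Icc_succ_top (by omega)]
    ring
  rw [qWeight, qWeight, hh, hq, PowerSeries.mul_inv_rev]
  linear_combination (hSer k i * (X ^ (i + 1)) ^ 2 * (1 + C ((k : ℚ) - 1) * X ^ (i + 1)) *
    (qPoch i)⁻¹ ^ 2 * (1 + (1 - X ^ (i + 1)) * (1 - X ^ (i + 1))⁻¹)) *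
      one_sub_X_pow_mul_inv (K := ℚ) (by omega : 1 ≤ i + 1)

def aTelescope (j i : ℕ) : PowerSeries ℚ := X ^ (j * i) * qWeight k i * (1 - X ^ i) ^ 2

theorem recurrenceExpr_Aterm (j i : ℕ) :
    recurrenceExpr (k : ℚ) (fun ℓ => Aterm k ℓ i) j =
      aTelescope k j i - aTelescope k j (i + 1) := by
  simp only [recurrenceExpr, Aterm_eq, aTelescope]
  linear_combination X ^ (j * (i + 1)) * qWeight_succ k i

theorem Aser_eq_xadicSum : Aser k = fun ℓ => xadicSum (Aterm k ℓ) := rfl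

theorem Aser_recurrence (j : ℕ) : recurrenceExpr (k : ℚ) (Aser k) j = 0 :=
  Aser_eq_xadicSum k ▸ recurrenceExpr_xadicSum_eq_zero
    (fun ℓ i => by rw [Aterm_eq]; exact dvd_mul_of_dvd_right (X_pow_dvd_qWeight k i) _)
    (fun i => by
      rw [aTelescope, mul_comm (X ^ _), mul_assoc]
      exact dvd_mul_of_dvd_left (X_pow_dvd_qWeight k i) _)
    (by simp [aTelescope]) (recurrenceExpr_Aterm k j)

def bSum (i : ℕ) : PowerSeries ℚ :=
  ∑ m ∈ Icc 1 i, (1 + 2 * (1 - X ^ m)⁻¹ - (1 + C ((k : ℚ) - 1) * X ^ m)⁻¹)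

theorem Bterm_eq (ℓ i : ℕ) :
    Bterm k ℓ i = X ^ (ℓ * i) * qWeight k i * ((ℓ : PowerSeries ℚ) + bSum k i) := by
  rw [Bterm, Aterm_eq]
  rfl

theorem one_add_mul_bSum_succ_sub (i : ℕ) :
    (1 + C ((k : ℚ) - 1) * X ^ (i + 1)) *
        (bSum k (i + 1) - bSum k i - 2 * X ^ (i + 1) * (1 - X ^ (i + 1))⁻¹) =
      2 + 3 * C ((k : ℚ) - 1) * X ^ (i + 1) := by
  have hinv : (1 + C ((k : ℚ) - 1) * X ^ (i + 1)) * (1 + C ((k : ℚ) - 1) * X ^ (i + 1))⁻¹ = 1 :=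
    PowerSeries.mul_inv_cancel _ (by simp)
  rw [bSum, bSum, sum_Icc_succ_top (by omega), add_sub_cancel_left]
  linear_combination (2 * (1 + C ((k : ℚ) - 1) * X ^ (i + 1))) * one_sub_X_pow_mul_inv (K := ℚ)
    (by omega : 1 ≤ i + 1) - hinv

def bTelescope (j i : ℕ) : PowerSeries ℚ :=
  X ^ (j * i) * qWeight k i *
    ((1 - X ^ i) ^ 2 * ((j : PowerSeries ℚ) + bSum k i) - 2 * X ^ i * (1 - X ^ i))

theorem bTelescope_succ (j i : ℕ) :
    bTelescope k j (i + 1) = X ^ (j * (i + 1)) * qWeight k i * (X ^ (i + 1)) ^ 2 *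
      ((1 + C ((k : ℚ) - 1) * X ^ (i + 1)) * ((j : PowerSeries ℚ) + bSum k i) + 2 +
        3 * C ((k : ℚ) - 1) * X ^ (i + 1)) := by
  calc bTelescope k j (i + 1)
      = X ^ (j * (i + 1)) * (qWeight k (i + 1) * (1 - X ^ (i + 1)) ^ 2) *
          ((j : PowerSeries ℚ) + bSum k (i + 1) - 2 * X ^ (i + 1) * (1 - X ^ (i + 1))⁻¹) := by
        rw [bTelescope]
        linear_combination (X ^ (j * (i + 1)) * qWeight k (i + 1) * 2 * X ^ (i + 1) *
          (1 - X ^ (i + 1))) * one_sub_X_pow_mul_inv (K := ℚ) (by omega : 1 ≤ i + 1)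
    _ = _ := by
        rw [qWeight_succ]
        linear_combination (X ^ (j * (i + 1)) * qWeight k i * (X ^ (i + 1)) ^ 2) *
          one_add_mul_bSum_succ_sub k i

theorem recurrenceExpr_Bterm (j i : ℕ) :
    recurrenceExpr (k : ℚ) (fun ℓ => Bterm k ℓ i) j =
      bTelescope k j i - bTelescope k j (i + 1) := by
  rw [bTelescope_succ]
  simp only [recurrenceExpr, Bterm_eq, bTelescope]
  push_cast
  ring

theorem Bser_eq_xadicSum : Bser k = fun ℓ => xadicSum (Bterm k ℓ) := rfl

theorem Bser_recurrence (j : ℕ) : recurrenceExpr (k : ℚ) (Bser k) j = 0 :=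
  Bser_eq_xadicSum k ▸ recurrenceExpr_xadicSum_eq_zero
    (fun ℓ i => by
      rw [Bterm_eq, mul_comm (X ^ _), mul_assoc]
      exact dvd_mul_of_dvd_left (X_pow_dvd_qWeight k i) _)
    (fun i => by
      rw [bTelescope, mul_comm (X ^ _), mul_assoc]
      exact dvd_mul_of_dvd_left (X_pow_dvd_qWeight k i) _)
    (by simp [bTelescope]) (recurrenceExpr_Bterm k j)

end Series

end RowConvex

namespace Blk

theorem mem_colsSet {b : Blk} {x : ℤ} : x ∈ b.colsSet ↔ b.left ≤ x ∧ x < b.left + b.width :=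
  Set.mem_Ico

theorem disjoint_cells_iff {k : ℕ} {b b' : Blk} (hb : b.width = k) (hb' : b'.width = k) :
    Disjoint b.cells b'.cells ↔
      b.height ≠ b'.height ∨ b.left + k ≤ b'.left ∨ b'.left + k ≤ b.left := by
  simp only [Set.disjoint_left, cells, colsSet, Set.mem_prod, Set.mem_Ico, Set.mem_singleton_iff,
    Prod.forall, hb, hb']
  constructor
  · intro h
    by_contra! hc
    exact h (max b.left b'.left) b.height ⟨⟨le_max_left _ _, by omega⟩, rfl⟩
      ⟨⟨le_max_right _ _, by omega⟩, hc.1⟩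
  · rintro h x y ⟨hx, rfl⟩ ⟨hx', hy⟩
    omega

def shiftUp (a : ℤ) (b : Blk) : Blk := ⟨b.left + a, b.height + 1, b.width⟩

def shiftDown (a : ℤ) (b : Blk) : Blk := ⟨b.left - a, b.height - 1, b.width⟩

theorem shiftUp_injective (a : ℤ) : Function.Injective (shiftUp a) := by
  rintro ⟨l, h, w⟩ ⟨l', h', w'⟩ he
  simp only [shiftUp, mk.injEq] at he ⊢
  omega

theorem shiftUp_shiftDown (a : ℤ) {b : Blk} (hb : b.height ≠ 0) :
    shiftUp a (shiftDown a b) = b := by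
  obtain ⟨l, h, w⟩ := b
  simp only [shiftUp, shiftDown, mk.injEq, sub_add_cancel, and_true, true_and]
  exact Nat.sub_add_cancel (Nat.one_le_iff_ne_zero.2 hb)

theorem mem_colsSet_shiftUp {a x : ℤ} {b : Blk} :
    x ∈ (shiftUp a b).colsSet ↔ x - a ∈ b.colsSet := by
  simp only [mem_colsSet, shiftUp]
  omega

theorem disjoint_cells_shiftUp {k : ℕ} {a : ℤ} {b b' : Blk} (hb : b.width = k)
    (hb' : b'.width = k) :
    Disjoint (shiftUp a b).cells (shiftUp a b').cells ↔ Disjoint b.cells b'.cells := by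
  rw [disjoint_cells_iff (b := shiftUp a b) (b' := shiftUp a b') hb hb', disjoint_cells_iff hb hb']
  simp only [shiftUp]
  omega

end Blk

namespace RowConvex

open Blk

variable {k : ℕ}

def rowBlock (k : ℕ) (a : ℤ) (m : ℕ) : Blk := ⟨a + m * k, 0, k⟩

def row (k : ℕ) (a : ℤ) (i : ℕ) : Finset Blk := (range i).image (rowBlock k a)

/-- The row `row k a i` with the tower `T` put on top of it, shifted by `a` columns. -/
def stack (k : ℕ) (a : ℤ) (i : ℕ) (T : Finset Blk) : Finset Blk :=
  row k a i ∪ T.image (shiftUp a)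

theorem rowBlock_injective (hk : 1 ≤ k) (a : ℤ) : Function.Injective (rowBlock k a) := by
  intro m m' h
  simp only [rowBlock, Blk.mk.injEq, add_right_inj, and_true] at h
  exact_mod_cast mul_right_cancel₀ (by positivity) h

theorem mem_row {a : ℤ} {i : ℕ} {b : Blk} : b ∈ row k a i ↔ ∃ m < i, rowBlock k a m = b := by
  simp [row]

theorem mem_stack {a : ℤ} {i : ℕ} {T : Finset Blk} {b : Blk} :
    b ∈ stack k a i T ↔ (∃ m < i, rowBlock k a m = b) ∨ ∃ c ∈ T, shiftUp a c = b := by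
  rw [stack, mem_union, mem_row, mem_image]

theorem filter_stack_height_eq_zero (a : ℤ) (i : ℕ) (T : Finset Blk) :
    (stack k a i T).filter (·.height = 0) = row k a i := by
  ext b
  simp only [mem_filter, mem_stack, mem_row]
  constructor
  · rintro ⟨h | ⟨c, -, rfl⟩, hb⟩
    · exact h
    · simp [shiftUp] at hb
  · rintro ⟨m, hm, rfl⟩
    exact ⟨Or.inl ⟨m, hm, rfl⟩, rfl⟩

theorem filter_stack_height_ne_zero (a : ℤ) (i : ℕ) (T : Finset Blk) :
    (stack k a i T).filter (·.height ≠ 0) = T.image (shiftUp a) := by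
  ext b
  simp only [mem_filter, mem_stack, mem_image]
  constructor
  · rintro ⟨⟨m, -, rfl⟩ | h, hb⟩
    · simp [rowBlock] at hb
    · exact h
  · rintro ⟨c, hc, rfl⟩
    exact ⟨Or.inr ⟨c, hc, rfl⟩, by simp [shiftUp]⟩

theorem card_stack (hk : 1 ≤ k) (a : ℤ) (i : ℕ) (T : Finset Blk) :
    (stack k a i T).card = i + T.card := by
  have hdisj : Disjoint (row k a i) (T.image (shiftUp a)) := by
    rw [← filter_stack_height_eq_zero a i T, ← filter_stack_height_ne_zero (k := k) a i T]
    exact disjoint_filter_filter_not _ _ _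
  rw [stack, card_union_of_disjoint hdisj, row, card_image_of_injective _ (rowBlock_injective hk a),
    card_range, card_image_of_injective _ (shiftUp_injective a)]

theorem stack_injective (hk : 1 ≤ k) {a a' : ℤ} {i i' : ℕ} {T T' : Finset Blk} (hi : 1 ≤ i)
    (hi' : 1 ≤ i') (h : stack k a i T = stack k a' i' T') : i = i' ∧ a = a' ∧ T = T' := by
  have hrow : row k a i = row k a' i' := by
    rw [← filter_stack_height_eq_zero a i T, h, filter_stack_height_eq_zero]
  have hii : i = i' := by
    simpa [row, card_image_of_injective _ (rowBlock_injective hk _)] using congrArg card hrow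
  have ha : a = a' := by
    obtain ⟨m, -, hm⟩ := mem_row.1 (hrow ▸ mem_row.2 ⟨0, hi, rfl⟩ : rowBlock k a 0 ∈ row k a' i')
    obtain ⟨m', -, hm'⟩ := mem_row.1 (hrow ▸ mem_row.2 ⟨0, hi', rfl⟩ : rowBlock k a' 0 ∈ row k a i)
    simp only [rowBlock, Blk.mk.injEq] at hm hm'
    have : (0 : ℤ) ≤ m * k := by positivity
    have : (0 : ℤ) ≤ m' * k := by positivity
    omega
  refine ⟨hii, ha, Finset.image_injective (shiftUp_injective a) ?_⟩
  rw [← filter_stack_height_ne_zero a i T, h, ha, filter_stack_height_ne_zero]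

theorem colsAt_stack_zero (hk : 1 ≤ k) {a : ℤ} {i : ℕ} {T : Finset Blk} {x : ℤ} :
    x ∈ colsAt (stack k a i T) 0 ↔ a ≤ x ∧ x < a + i * k := by
  simp only [colsAt, Set.mem_ofPred_eq, mem_stack]
  constructor
  · rintro ⟨b, ⟨m, hm, rfl⟩ | ⟨c, -, rfl⟩, hb, hx⟩
    · have : ((m : ℤ) + 1) * k ≤ i * k := by gcongr; exact_mod_cast hm
      have : (0 : ℤ) ≤ m * k := by positivity
      simp only [mem_colsSet, rowBlock] at hx
      constructor <;> linarith
    · simp [shiftUp] at hb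
  · rintro ⟨hax, hxi⟩
    have hk' : (0 : ℤ) < k := by exact_mod_cast hk
    have hq₀ : 0 ≤ (x - a) / k := Int.ediv_nonneg (by omega) hk'.le
    have hq₁ : (x - a) / k * k ≤ x - a := Int.ediv_mul_le _ hk'.ne'
    have hq₂ : x - a < ((x - a) / k + 1) * k := Int.lt_ediv_add_one_mul_self _ hk'
    have hqi : (x - a) / k < i := by
      by_contra! h
      have : (i : ℤ) * k ≤ (x - a) / k * k := by gcongr
      linarith
    refine ⟨rowBlock k a ((x - a) / k).toNat, Or.inl ⟨_, by omega, rfl⟩, rfl, ?_⟩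
    simp only [mem_colsSet, rowBlock, Int.toNat_of_nonneg hq₀]
    constructor <;> linarith

theorem colsAt_stack_succ {a : ℤ} {i h : ℕ} {T : Finset Blk} {x : ℤ} :
    x ∈ colsAt (stack k a i T) (h + 1) ↔ x - a ∈ colsAt T h := by
  simp only [colsAt, Set.mem_ofPred_eq, mem_stack]
  constructor
  · rintro ⟨b, ⟨m, -, rfl⟩ | ⟨c, hc, rfl⟩, hb, hx⟩
    · simp [rowBlock] at hb
    · exact ⟨c, hc, by simpa [shiftUp] using hb, mem_colsSet_shiftUp.1 hx⟩
  · rintro ⟨c, hc, hb, hx⟩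
    exact ⟨shiftUp a c, Or.inr ⟨c, hc, rfl⟩, by simp [shiftUp, hb], mem_colsSet_shiftUp.2 hx⟩

theorem forall_width_stack {a : ℤ} {i : ℕ} {T : Finset Blk} :
    (∀ b ∈ stack k a i T, b.width = k) ↔ ∀ c ∈ T, c.width = k := by
  simp [mem_stack, or_imp, forall_and, rowBlock, shiftUp]

theorem pairwise_disjoint_cells_row (a : ℤ) (i : ℕ) :
    (row k a i : Set Blk).Pairwise fun b b' => Disjoint b.cells b'.cells := by
  have key : ∀ m m' : ℕ, m < m' → Disjoint (rowBlock k a m).cells (rowBlock k a m').cells := by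
    intro m m' h
    have : ((m : ℤ) + 1) * k ≤ m' * k := by gcongr; exact_mod_cast h
    rw [disjoint_cells_iff (b := rowBlock k a m) (b' := rowBlock k a m') rfl rfl]
    simp only [rowBlock]
    right; left; linarith
  rintro b hb b' hb' hne
  obtain ⟨m, -, rfl⟩ := mem_row.1 hb
  obtain ⟨m', -, rfl⟩ := mem_row.1 hb'
  rcases lt_or_gt_of_ne (fun h : m = m' => hne (h ▸ rfl)) with h | h
  · exact key m m' h
  · exact (key m' m h).symm

theorem disjointCells_stack {a : ℤ} {i : ℕ} {T : Finset Blk} (hw : ∀ c ∈ T, c.width = k) :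
    disjointCells (stack k a i T) ↔ disjointCells T := by
  have : Std.Symm fun b b' : Blk => Disjoint b.cells b'.cells := ⟨fun _ _ h => h.symm⟩
  rw [disjointCells, stack, coe_union, Set.pairwise_union_of_symm, coe_image,
    (shiftUp_injective a).injOn.pairwise_image]
  constructor
  · rintro ⟨-, h, -⟩ c hc c' hc' hne
    exact (disjoint_cells_shiftUp (hw c hc) (hw c' hc')).1 (h hc hc' hne)
  · intro h
    refine ⟨pairwise_disjoint_cells_row a i,
      fun c hc c' hc' hne => (disjoint_cells_shiftUp (hw c hc) (hw c' hc')).2 (h hc hc' hne), ?_⟩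
    rintro b hb - ⟨c, hc, rfl⟩ -
    obtain ⟨m, -, rfl⟩ := mem_row.1 hb
    rw [disjoint_cells_iff (b := rowBlock k a m) (b' := shiftUp a c) rfl (hw c hc)]
    simp [rowBlock, shiftUp]

theorem supported_iff_colsAt {T : Finset Blk} :
    supported T ↔ ∀ b ∈ T, ∀ h, b.height = h + 1 → ∃ x ∈ b.colsSet, x ∈ colsAt T h := by
  simp only [supported, colsAt, Set.mem_ofPred_eq]
  constructor <;> intro hs b hb h hbh
  · obtain ⟨b', hb', hh, x, hx, hx'⟩ := hs b hb h hbh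
    exact ⟨x, hx, b', hb', hh, hx'⟩
  · obtain ⟨x, hx, b', hb', hh, hx'⟩ := hs b hb h hbh
    exact ⟨b', hb', hh, x, hx, hx'⟩

theorem supported_stack (hk : 1 ≤ k) {a : ℤ} {i : ℕ} {T : Finset Blk} :
    supported (stack k a i T) ↔
      supported T ∧ ∀ c ∈ T, c.height = 0 → ∃ x, x ∈ c.colsSet ∧ 0 ≤ x ∧ x < (i * k : ℤ) := by
  rw [supported_iff_colsAt, supported_iff_colsAt]
  constructor
  · intro hs
    have hup : ∀ c ∈ T, ∀ h, c.height = h →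
        ∃ x ∈ (shiftUp a c).colsSet, x ∈ colsAt (stack k a i T) h :=
      fun c hc h hch => hs _ (mem_stack.2 (Or.inr ⟨c, hc, rfl⟩)) h (by simp [shiftUp, hch])
    refine ⟨fun c hc h hch => ?_, fun c hc hch => ?_⟩
    · obtain ⟨x, hx, hx'⟩ := hup c hc _ hch
      exact ⟨x - a, mem_colsSet_shiftUp.1 hx, colsAt_stack_succ.1 hx'⟩
    · obtain ⟨x, hx, hx'⟩ := hup c hc _ hch
      rw [colsAt_stack_zero hk] at hx'
      exact ⟨x - a, mem_colsSet_shiftUp.1 hx, by omega, by omega⟩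
  · rintro ⟨hs, hp⟩ b hb h hbh
    obtain ⟨m, -, rfl⟩ | ⟨c, hc, rfl⟩ := mem_stack.1 hb
    · simp [rowBlock] at hbh
    · simp only [shiftUp, Nat.add_right_cancel_iff] at hbh
      cases h with
      | zero =>
        obtain ⟨y, hy, hy₀, hyi⟩ := hp c hc hbh
        exact ⟨y + a, mem_colsSet_shiftUp.2 (by simpa using hy),
          (colsAt_stack_zero hk).2 ⟨by omega, by omega⟩⟩
      | succ h =>
        obtain ⟨y, hy, hy'⟩ := hs c hc h hbh
        exact ⟨y + a, mem_colsSet_shiftUp.2 (by simpa using hy),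
          colsAt_stack_succ.2 (by simpa using hy')⟩

theorem rowConvex_stack (hk : 1 ≤ k) {a : ℤ} {i : ℕ} {T : Finset Blk} :
    rowConvex (stack k a i T) ↔ rowConvex T := by
  constructor
  · intro hc h x y z hx hz hxy hyz
    have := hc (h + 1) (x + a) (y + a) (z + a) (colsAt_stack_succ.2 (by simpa using hx))
      (colsAt_stack_succ.2 (by simpa using hz)) (by omega) (by omega)
    simpa using colsAt_stack_succ.1 this
  · intro hc h x y z hx hz hxy hyz
    cases h with
    | zero =>
      rw [colsAt_stack_zero hk] at hx hz ⊢
      omega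
    | succ h =>
      rw [colsAt_stack_succ] at hx hz ⊢
      exact hc h _ _ _ hx hz (by omega) (by omega)

theorem platform_stack (hk : 1 ≤ k) {j i : ℕ} (hj : 1 ≤ j) (hi : 1 ≤ i) {a : ℤ} {T : Finset Blk} :
    (∀ b ∈ stack k a i T, b.height = 0 → ∃ x, x ∈ b.colsSet ∧ 0 ≤ x ∧ x < (j * k : ℤ)) ↔
      1 ≤ a + k ∧ a + i * k ≤ j * k + k - 1 := by
  obtain ⟨i, rfl⟩ := Nat.exists_eq_add_of_le' hi
  have hrow : ∀ m < i + 1, rowBlock k a m ∈ stack k a (i + 1) T :=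
    fun m hm => mem_stack.2 (Or.inl ⟨m, hm, rfl⟩)
  have hjk : (1 : ℤ) ≤ j * k := by exact_mod_cast Nat.one_le_iff_ne_zero.2 (by positivity)
  push_cast
  constructor
  · intro hp
    obtain ⟨x, hx, hx₀, -⟩ := hp _ (hrow 0 (by omega)) rfl
    obtain ⟨y, hy, -, hyj⟩ := hp _ (hrow i (by omega)) rfl
    simp only [mem_colsSet, rowBlock] at hx hy
    constructor <;> push_cast at * <;> linarith
  · rintro ⟨ha₁, ha₂⟩ b hb hb₀
    obtain ⟨m, hm, rfl⟩ | ⟨c, -, rfl⟩ := mem_stack.1 hb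
    · have : (m : ℤ) * k ≤ i * k := by gcongr; omega
      have : (0 : ℤ) ≤ m * k := by positivity
      refine ⟨max (a + m * k) 0, ?_, le_max_right _ _, max_lt (by linarith) (by linarith)⟩
      simp only [mem_colsSet, rowBlock]
      exact ⟨le_max_left _ _, max_lt (by linarith) (by linarith)⟩
    · simp [shiftUp] at hb₀

theorem isPlatformRC_stack_iff (hk : 1 ≤ k) {j i : ℕ} (hj : 1 ≤ j) (hi : 1 ≤ i) {a : ℤ}
    {T : Finset Blk} :
    IsPlatformRC k j (stack k a i T) ↔
      IsPlatformRC k i T ∧ 1 ≤ a + k ∧ a + i * k ≤ j * k + k - 1 := by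
  constructor
  · rintro ⟨hw, hd, hs, hr, hp⟩
    rw [forall_width_stack] at hw
    rw [supported_stack hk] at hs
    exact ⟨⟨hw, (disjointCells_stack hw).1 hd, hs.1, (rowConvex_stack hk).1 hr, hs.2⟩,
      (platform_stack hk hj hi).1 hp⟩
  · rintro ⟨⟨hw, hd, hs, hr, hp⟩, ha⟩
    exact ⟨forall_width_stack.2 hw, (disjointCells_stack hw).2 hd, (supported_stack hk).2 ⟨hs, hp⟩,
      (rowConvex_stack hk).2 hr, (platform_stack hk hj hi).2 ha⟩

theorem eq_rowBlock {a : ℤ} {m : ℕ} {b : Blk} (hb : b.width = k ∧ b.height = 0)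
    (hl : b.left = a + m * k) : b = rowBlock k a m := by
  obtain ⟨l, h, w⟩ := b
  simp_all [rowBlock]

theorem left_add_le_of_disjoint (hk : 1 ≤ k) {a : ℤ} {m : ℕ} {b : Blk}
    (hb : b.width = k ∧ b.height = 0) (hd : Disjoint b.cells (rowBlock k a m).cells)
    (hl : a + m * k ≤ b.left) : a + (m + 1 : ℕ) * k ≤ b.left := by
  rw [disjoint_cells_iff hb.1 rfl] at hd
  simp only [rowBlock, hb.2, ne_eq, not_true_eq_false, false_or] at hd
  push_cast
  have : (1 : ℤ) ≤ k := by exact_mod_cast hk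
  rcases hd with h | h <;> linarith

theorem add_mul_le_left_of_disjoint (hk : 1 ≤ k) {a : ℤ} {b : Blk}
    (hb : b.width = k ∧ b.height = 0) (ha : a ≤ b.left) {m : ℕ}
    (hd : ∀ m' ≤ m, Disjoint b.cells (rowBlock k a m').cells) : a + (m + 1 : ℕ) * k ≤ b.left := by
  induction m with
  | zero => exact left_add_le_of_disjoint hk hb (hd 0 le_rfl) (by simpa using ha)
  | succ m ih =>
    exact left_add_le_of_disjoint hk hb (hd _ le_rfl) (ih fun m' hm' => hd m' (by omega))

theorem rowBlock_succ_mem (hk : 1 ≤ k) {R : Finset Blk} (hR : ∀ b ∈ R, b.width = k ∧ b.height = 0)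
    (hd : disjointCells R)
    (hc : ∀ x y z, x ∈ colsAt R 0 → z ∈ colsAt R 0 → x ≤ y → y ≤ z → y ∈ colsAt R 0)
    {a : ℤ} (hmin : ∀ b ∈ R, a ≤ b.left) {m : ℕ} (hrow : ∀ m' ≤ m, rowBlock k a m' ∈ R)
    (hm : m + 1 < R.card) : rowBlock k a (m + 1) ∈ R := by
  have hfar : ∀ b ∈ R, (∀ m' ≤ m, b ≠ rowBlock k a m') → a + (m + 1 : ℕ) * k ≤ b.left :=
    fun b hb hne => add_mul_le_left_of_disjoint hk (hR b hb) (hmin b hb)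
      fun m' hm' => hd hb (hrow m' hm') (hne m' hm')
  have hcard : ((range (m + 1)).image (rowBlock k a)).card < R.card := by
    rwa [card_image_of_injective _ (rowBlock_injective hk a), card_range]
  obtain ⟨b, hb, hb'⟩ := exists_mem_notMem_of_card_lt_card hcard
  have hab : a ∈ (rowBlock k a 0).colsSet := by
    simp only [mem_colsSet, rowBlock, Nat.cast_zero, zero_mul, add_zero]
    omega
  have hbb : b.left ∈ b.colsSet := by
    rw [mem_colsSet, (hR b hb).1]
    omega
  -- by convexity some block `c` covers the column just right of the first `m + 1` row blocks;
  -- disjointness forces `c` to be the next row block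
  obtain ⟨c, hc, -, hyc⟩ := hc a (a + (m + 1 : ℕ) * k) b.left ⟨_, hrow 0 (Nat.zero_le m), rfl, hab⟩
    ⟨b, hb, (hR b hb).2, hbb⟩ (le_add_of_nonneg_right (by positivity))
    (hfar b hb fun m' hm' h => hb' (mem_image.2 ⟨m', mem_range.2 (by omega), h.symm⟩))
  rw [mem_colsSet, (hR c hc).1] at hyc
  by_cases hcr : ∃ m' ≤ m, c = rowBlock k a m'
  · obtain ⟨m', hm', rfl⟩ := hcr
    have : ((m' : ℤ) + 1) * k ≤ (m + 1 : ℕ) * k := by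
      gcongr
      exact_mod_cast Nat.succ_le_succ hm'
    simp only [rowBlock] at hyc
    linarith
  · push Not at hcr
    rwa [← eq_rowBlock (hR c hc) (le_antisymm hyc.1 (hfar c hc hcr))]

theorem exists_eq_row (hk : 1 ≤ k) {R : Finset Blk} (hR : ∀ b ∈ R, b.width = k ∧ b.height = 0)
    (hd : disjointCells R)
    (hc : ∀ x y z, x ∈ colsAt R 0 → z ∈ colsAt R 0 → x ≤ y → y ≤ z → y ∈ colsAt R 0)
    (hne : R.Nonempty) : ∃ a, R = row k a R.card := by
  set a := (R.image Blk.left).min' (hne.image _)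
  have hmin : ∀ b ∈ R, a ≤ b.left := fun b hb => min'_le _ _ (mem_image_of_mem _ hb)
  have h₀ : rowBlock k a 0 ∈ R := by
    obtain ⟨b, hb, hba⟩ := mem_image.1 ((R.image Blk.left).min'_mem (hne.image _))
    rwa [← eq_rowBlock (hR b hb) (by simpa using hba)]
  have hmem : ∀ m < R.card, ∀ m' ≤ m, rowBlock k a m' ∈ R := by
    intro m
    induction m with
    | zero => intro _ m' hm'; rwa [Nat.le_zero.1 hm']
    | succ m ih =>
      intro hm m' hm'
      rcases Nat.lt_or_eq_of_le hm' with hm' | rfl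
      · exact ih (by omega) m' (by omega)
      · exact rowBlock_succ_mem hk hR hd hc hmin (ih (by omega)) hm
  refine ⟨a, (eq_of_subset_of_card_le (fun b hb => ?_) ?_).symm⟩
  · obtain ⟨m, hm, rfl⟩ := mem_row.1 hb
    exact hmem m hm m le_rfl
  · rw [row, card_image_of_injective _ (rowBlock_injective hk a), card_range]

theorem exists_height_eq_zero {T : Finset Blk} (hs : supported T) (hne : T.Nonempty) :
    ∃ b ∈ T, b.height = 0 := by
  obtain ⟨b, hb, hmin⟩ := T.exists_min_image Blk.height hne
  cases hbh : b.height with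
  | zero => exact ⟨b, hb, hbh⟩
  | succ h =>
    obtain ⟨b', hb', hb'h, -⟩ := hs b hb h hbh
    have := hmin b' hb'
    omega

theorem exists_eq_stack (hk : 1 ≤ k) {j : ℕ} {T : Finset Blk} (hT : IsPlatformRC k j T)
    (hne : T.Nonempty) : ∃ i a T', 1 ≤ i ∧ T = stack k a i T' := by
  obtain ⟨hw, hd, hs, hr, -⟩ := hT
  set R := T.filter (·.height = 0)
  have hcols : ∀ x, x ∈ colsAt R 0 ↔ x ∈ colsAt T 0 := by
    simp [R, colsAt, and_assoc]
  have hRne : R.Nonempty := by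
    obtain ⟨b, hb, hb₀⟩ := exists_height_eq_zero hs hne
    exact ⟨b, mem_filter.2 ⟨hb, hb₀⟩⟩
  obtain ⟨a, ha⟩ := exists_eq_row hk (R := R)
    (fun b hb => ⟨hw b (mem_filter.1 hb).1, (mem_filter.1 hb).2⟩)
    (hd.mono (coe_subset.2 (filter_subset _ _)))
    (fun x y z hx hz hxy hyz => (hcols y).2 (hr 0 x y z ((hcols x).1 hx) ((hcols z).1 hz) hxy hyz))
    hRne
  refine ⟨R.card, a, (T.filter (·.height ≠ 0)).image (shiftDown a), card_pos.2 hRne, ?_⟩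
  rw [stack, ← ha, image_image, image_congr (f := shiftUp a ∘ shiftDown a) (g := id)
    fun b hb => shiftUp_shiftDown a (mem_filter.1 hb).2,
    image_id, filter_union_filter_not_eq]

abbrev Tower (k j n : ℕ) := {T : Finset Blk // IsPlatformRC k j T ∧ T.card = n}

/-- The bottom rows `row k a i` that a tower with `n` blocks over a platform of width `jk`
can have. -/
def stackIndex (k j n : ℕ) : Finset (Σ _ : ℕ, ℤ) :=
  (Icc 1 (min (j + 1) n)).sigma fun i => Icc (1 - k : ℤ) (j * k + k - 1 - i * k)

theorem mem_stackIndex {j n : ℕ} {x : Σ _ : ℕ, ℤ} :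
    x ∈ stackIndex k j n ↔
      (1 ≤ x.1 ∧ x.1 ≤ j + 1 ∧ x.1 ≤ n) ∧ 1 ≤ x.2 + k ∧ x.2 + x.1 * k ≤ j * k + k - 1 := by
  simp only [stackIndex, mem_sigma, mem_Icc, le_min_iff]
  omega

theorem le_succ_of_stack_bounds (hk : 1 ≤ k) {j i : ℕ} {a : ℤ} (h₁ : 1 ≤ a + k)
    (h₂ : a + i * k ≤ j * k + k - 1) : i ≤ j + 1 := by
  by_contra! h
  have : ((j : ℤ) + 2) * k ≤ i * k := by gcongr; exact_mod_cast h
  have : (1 : ℤ) ≤ k := by exact_mod_cast hk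
  linarith

def stackTower (hk : 1 ≤ k) {j n : ℕ} (hj : 1 ≤ j)
    (p : Σ x : stackIndex k j n, Tower k x.1.1 (n - x.1.1)) : Tower k j n :=
  have hp := mem_stackIndex.1 p.1.2
  ⟨stack k p.1.1.2 p.1.1.1 p.2.1, (isPlatformRC_stack_iff hk hj hp.1.1).2 ⟨p.2.2.1, hp.2⟩, by
    rw [card_stack hk, p.2.2.2]
    omega⟩

theorem stackTower_bijective (hk : 1 ≤ k) {j n : ℕ} (hj : 1 ≤ j) (hn : 1 ≤ n) :
    Function.Bijective (stackTower (n := n) hk hj) := by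
  constructor
  · rintro ⟨⟨⟨i, a⟩, hx⟩, T, hT⟩ ⟨⟨⟨i', a'⟩, hx'⟩, T', hT'⟩ h
    obtain ⟨rfl, rfl, rfl⟩ := stack_injective hk (mem_stackIndex.1 hx).1.1
      (mem_stackIndex.1 hx').1.1 (congrArg Subtype.val h)
    rfl
  · rintro ⟨T, hT, hTn⟩
    obtain ⟨i, a, T', hi, rfl⟩ := exists_eq_stack hk hT (card_pos.1 (by omega))
    obtain ⟨hT', ha₁, ha₂⟩ := (isPlatformRC_stack_iff hk hj hi).1 hT
    rw [card_stack hk] at hTn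
    have hx : (⟨i, a⟩ : Σ _ : ℕ, ℤ) ∈ stackIndex k j n :=
      mem_stackIndex.2 ⟨⟨hi, le_succ_of_stack_bounds hk ha₁ ha₂, show i ≤ n by omega⟩, ha₁, ha₂⟩
    exact ⟨⟨⟨_, hx⟩, T', hT', show T'.card = n - i by omega⟩, rfl⟩

instance (j : ℕ) : Subsingleton (Tower k j 0) :=
  ⟨fun T T' => Subtype.ext ((card_eq_zero.1 T.2.2).trans (card_eq_zero.1 T'.2.2).symm)⟩

theorem fPlatform_zero (j : ℕ) : fPlatform k j 0 = 1 := by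
  refine Nat.card_eq_one_iff_unique.2 ⟨inferInstance, ⟨⟨∅, ?_, rfl⟩⟩⟩
  simp [IsPlatformRC, disjointCells, supported, rowConvex, colsAt]

theorem finite_tower (hk : 1 ≤ k) (n : ℕ) : ∀ j, 1 ≤ j → Finite (Tower k j n) := by
  induction n using Nat.strong_induction_on with
  | _ n ih =>
    intro j hj
    rcases Nat.eq_zero_or_pos n with rfl | hn
    · exact Finite.of_subsingleton
    · have (x : stackIndex k j n) : Finite (Tower k x.1.1 (n - x.1.1)) :=
        ih _ (by have := mem_stackIndex.1 x.2; omega) _ (mem_stackIndex.1 x.2).1.1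
      exact Finite.of_surjective _ (stackTower_bijective hk hj hn).2

theorem fPlatform_eq_sum (hk : 1 ≤ k) {j n : ℕ} (hj : 1 ≤ j) (hn : 1 ≤ n) :
    fPlatform k j n = ∑ i ∈ Icc 1 (min (j + 1) n),
      (j * k + 2 * k - 1 - i * k : ℤ).toNat * fPlatform k i (n - i) := by
  have (x : stackIndex k j n) : Finite (Tower k x.1.1 (n - x.1.1)) :=
    finite_tower hk _ _ (mem_stackIndex.1 x.2).1.1
  rw [fPlatform, ← Nat.card_congr (Equiv.ofBijective _ (stackTower_bijective hk hj hn)),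
    Nat.card_sigma, sum_coe_sort (stackIndex k j n) fun x => Nat.card (Tower k x.1 (n - x.1)),
    stackIndex, sum_sigma]
  refine sum_congr rfl fun i _ => ?_
  simp only [sum_const, Int.card_Icc, smul_eq_mul]
  congr 2
  ring

theorem defect_Fser (hk : 1 ≤ k) {j : ℕ} (hj : 1 ≤ j) : defect (k : ℚ) (Fser k) j = 1 := by
  have hterm : ∀ n i, coeff n (C (weight (k : ℚ) j i) * X ^ i * Fser k i) =
      if i ≤ n then weight (k : ℚ) j i * fPlatform k i (n - i) else 0 := by
    intro n i
    rw [mul_comm (C _), mul_assoc, coeff_X_pow_mul', coeff_C_mul, Fser, coeff_mk]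
  ext n
  rw [defect, map_sub, map_sum, sum_congr rfl fun i _ => hterm n i, ← sum_filter, coeff_one, Fser,
    coeff_mk]
  rcases Nat.eq_zero_or_pos n with rfl | hn
  · have hempty : (Icc 1 (j + 1)).filter (· ≤ 0) = ∅ :=
      filter_eq_empty_iff.2 fun i hi => by have := (mem_Icc.1 hi).1; omega
    rw [hempty, sum_empty, fPlatform_zero]
    simp
  · have hIcc : (Icc 1 (j + 1)).filter (· ≤ n) = Icc 1 (min (j + 1) n) := by
      ext i; simp only [mem_filter, mem_Icc, le_min_iff]; omega
    rw [fPlatform_eq_sum hk hj hn, hIcc, if_neg (by omega), Nat.cast_sum, sub_eq_zero]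
    refine sum_congr rfl fun i hi => ?_
    have hij : (i : ℤ) * k ≤ (j + 1) * k := by
      gcongr
      exact_mod_cast (le_min_iff.1 (mem_Icc.1 hi).2).1
    have hnn : (0 : ℤ) ≤ j * k + 2 * k - 1 - i * k := by
      have : (1 : ℤ) ≤ k := by exact_mod_cast hk
      linarith
    rw [Nat.cast_mul, weight, ← Int.cast_natCast, Int.toNat_of_nonneg hnn]
    push_cast
    ring

end RowConvex

end

/-- The exact generating function for row-convex `k`-omino towers over a platform:
`F_ℓ · [(1 − (2k−1)(1+z)z + k² z³) T_{1,2} + (k−1)((2k−1)z − 1) z³ T_{1,3} + (k−1)² z⁵ T_{2,3}]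
 = (1 + kz) T_{1,ℓ} + (kz² − 1) T_{2,ℓ} + (k−1) z³ T_{3,ℓ}`. -/
theorem rowconvex_gf (k : ℕ) (hk : 2 ≤ k) (ℓ : ℕ) (hℓ : 1 ≤ ℓ) :
    Fser k ℓ *
        ((1 - PowerSeries.C (2 * (k : ℚ) - 1) *
            ((1 + PowerSeries.X) * PowerSeries.X) +
            PowerSeries.C ((k : ℚ) ^ 2) * PowerSeries.X ^ 3) * Tst k 1 2 +
          PowerSeries.C ((k : ℚ) - 1) *
            (PowerSeries.C (2 * (k : ℚ) - 1) * PowerSeries.X - 1) *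
            PowerSeries.X ^ 3 * Tst k 1 3 +
          PowerSeries.C (((k : ℚ) - 1) ^ 2) * PowerSeries.X ^ 5 * Tst k 2 3) =
      (1 + PowerSeries.C (k : ℚ) * PowerSeries.X) * Tst k 1 ℓ +
        (PowerSeries.C (k : ℚ) * PowerSeries.X ^ 2 - 1) * Tst k 2 ℓ +
        PowerSeries.C ((k : ℚ) - 1) * PowerSeries.X ^ 3 * Tst k 3 ℓ := by
  have key := RowConvex.mul_eq_of_defect_eq (fun j hj => RowConvex.defect_Fser (by omega) hj)
    (RowConvex.defect_casoratian (RowConvex.Aser_recurrence k) (RowConvex.Bser_recurrence k)) hℓ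
  simp only [RowConvex.defect_one, RowConvex.defect_two] at key
  simp only [Tst, map_sub, map_mul, map_pow, map_ofNat, map_one]
  linear_combination key
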